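/- arXiv:1310.5396 — 2 statements merged into one kernel-verified Lean document; each statement's English description precedes it below -/
import Mathlib

section
/- For a finite tree T, define Y_ℓ(T) = Σ over edges {u,v} of T with max(d(u), d(v)) ≥ 4 of [ C(d(v)−1, 2)·(d(u)−1) + C(d(u)−1, 2)·(d(v)−1) ], where d denotes vertex degree. Then Y_ℓ(T) ≤ 36 S(T). -/
/-!
For an edge `uv` with degrees `a, b` and `max a b ≥ 4`, the edge term is at most
`9 (C(a-1,3) + C(b-1,3))`, a cubic inequality in `a - 1, b - 1`. Summing over the edges, each vertex
`v` collects `deg v · 9 C(deg v - 1, 3) = 36 C(deg v, 4)`. Finally, a vertex together with four of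
its neighbours spans an induced `K_{1,4}`; as a tree is triangle-free, the centre of such a star is
determined by its vertex set, so `∑ C(deg v, 4) ≤ S(T)`.
-/

open SimpleGraph Finset

/-- The number of copies of `S` in `T`: the number of vertex subsets of `T` whose induced
subgraph is connected and isomorphic to `S`. -/
noncomputable def copyCount {α V : Type*} [Fintype V] (S : SimpleGraph α) (T : SimpleGraph V) : ℕ :=
  Set.ncard {s : Finset V |
    (T.induce (s : Set V)).Connected ∧ Nonempty (T.induce (s : Set V) ≃g S)}

/-- The star on `k` vertices, centered at the vertex `0`. -/
def starGraph (k : ℕ) : SimpleGraph (Fin k) where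
  Adj a b := a ≠ b ∧ ((a : ℕ) = 0 ∨ (b : ℕ) = 0)
  symm := ⟨fun _ _ h => ⟨h.1.symm, h.2.symm⟩⟩
  loopless := ⟨fun _ h => h.1 rfl⟩

theorem Nat.mul_choose_sub_one (n k : ℕ) : n * (n - 1).choose k = (k + 1) * n.choose (k + 1) := by
  cases n with
  | zero => simp
  | succ n => rw [Nat.add_sub_cancel, Nat.add_one_mul_choose_eq, mul_comm]

theorem Nat.cast_choose_three {K : Type*} [Field K] [CharZero K] (n : ℕ) :
    (n.choose 3 : K) = n * (n - 1) * (n - 2) / 6 := by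
  rw [Nat.cast_choose_eq_descPochhammer_div]
  simp [descPochhammer_succ_right, Nat.factorial]

theorem Nat.choose_two_mul_add_le (x y : ℕ) (h : 3 ≤ max x y) :
    y.choose 2 * x + x.choose 2 * y ≤ 9 * (x.choose 3 + y.choose 3) := by
  wlog hyx : y ≤ x generalizing x y
  · have := this y x (by rwa [max_comm]) (by omega)
    linarith
  have hx : (3 : ℚ) ≤ x := by exact_mod_cast (show 3 ≤ x by omega)
  suffices (y.choose 2 * x + x.choose 2 * y : ℚ) ≤ 9 * (x.choose 3 + y.choose 3) by
    exact_mod_cast this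
  rw [Nat.cast_choose_two, Nat.cast_choose_two, Nat.cast_choose_three, Nat.cast_choose_three]
  -- The polynomial inequality fails for real `y ∈ (2, 3)`, so small `y` are checked separately.
  rcases Nat.lt_or_ge y 3 with hy | hy
  · have ha := sub_nonneg.2 hx
    interval_cases y <;> push_cast <;>
      nlinarith [mul_nonneg ha ha, mul_nonneg (mul_nonneg ha ha) ha]
  · have ha := sub_nonneg.2 hx
    have hb := sub_nonneg.2 (show (3 : ℚ) ≤ y by exact_mod_cast hy)
    have hc := sub_nonneg.2 (show (y : ℚ) ≤ x by exact_mod_cast hyx)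
    nlinarith [mul_nonneg ha hb, mul_nonneg hb hb, mul_nonneg hb hc, mul_nonneg ha hc,
      mul_nonneg (mul_nonneg hb hb) hb, mul_nonneg (mul_nonneg hb hb) hc,
      mul_nonneg (mul_nonneg hb hc) hc]

namespace SimpleGraph

variable {V : Type*} (G : SimpleGraph V)

def starGraphIsoOfEquiv {W : Type*} (e : V ≃ W) (r : V) :
    SimpleGraph.starGraph r ≃g SimpleGraph.starGraph (e r) :=
  ⟨e, by simp [e.injective.eq_iff]⟩

theorem starGraph_eq_starGraph_zero (k : ℕ) :
    _root_.starGraph (k + 1) = SimpleGraph.starGraph 0 := by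
  ext a b
  simp [_root_.starGraph, Fin.val_eq_zero_iff]

theorem nonempty_starGraph_iso_starGraph [Fintype V] (r : V) {k : ℕ}
    (hk : Fintype.card V = k + 1) :
    Nonempty (SimpleGraph.starGraph r ≃g _root_.starGraph (k + 1)) := by
  let e := (Fintype.equivFinOfCardEq hk).trans (Equiv.swap (Fintype.equivFinOfCardEq hk r) 0)
  have he : e r = 0 := Equiv.swap_apply_left _ _
  rw [starGraph_eq_starGraph_zero, ← he]
  exact ⟨starGraphIsoOfEquiv e r⟩

variable [Fintype V] [DecidableRel G.Adj] [DecidableEq V]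

theorem sum_edgeFinset_lift_add {M : Type*} [AddCommMonoid M] (h : V → M) :
    ∑ e ∈ G.edgeFinset, Sym2.lift ⟨fun u v => h u + h v, fun _ _ => add_comm _ _⟩ e
      = ∑ v, G.degree v • h v := by
  have edges : ∑ e ∈ G.edgeFinset, Sym2.lift ⟨fun u v => h u + h v, fun _ _ => add_comm _ _⟩ e
      = ∑ d : G.Dart, h d.fst := by
    rw [← sum_fiberwise_of_maps_to (g := Dart.edge) (t := G.edgeFinset)
      fun d _ => G.mem_edgeFinset.2 d.edge_mem]
    refine sum_congr rfl fun e he => ?_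
    induction e using Sym2.ind with
    | _ u v =>
      let d : G.Dart := ⟨(u, v), G.mem_edgeFinset.1 he⟩
      change Sym2.lift _ d.edge = ∑ d' ∈ {d' : G.Dart | d'.edge = d.edge}, h d'.fst
      rw [d.edge_fiber, sum_pair d.symm_ne.symm]
      rfl
  rw [edges, ← sum_fiberwise univ fun d : G.Dart => d.fst]
  refine sum_congr rfl fun v _ => ?_
  rw [sum_congr rfl fun d hd => by rw [(mem_filter.1 hd).2], sum_const,
    dart_fst_fiber_card_eq_degree]

theorem induce_insert_eq_starGraph (hG : G.CliqueFree 3) {v : V} {t : Finset V}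
    (ht : t ⊆ G.neighborFinset v) :
    G.induce (insert v t : Finset V) = SimpleGraph.starGraph ⟨v, by simp⟩ := by
  have hadj {x : V} (hx : x ∈ insert v t) (hxv : x ≠ v) : G.Adj v x :=
    (G.mem_neighborFinset v x).1 (ht ((mem_insert.1 hx).resolve_left hxv))
  ext ⟨x, hx⟩ ⟨y, hy⟩
  simp only [comap_adj, Function.Embedding.subtype_apply, starGraph_adj, ne_eq, Subtype.mk.injEq]
  constructor
  · intro hxy
    refine ⟨hxy.ne, ?_⟩
    by_contra! hxyv
    exact isIndepSet_neighborSet_of_triangleFree G hG v (hadj hx hxyv.1) (hadj hy hxyv.2)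
      hxy.ne hxy
  · rintro ⟨hxy, rfl | rfl⟩
    · exact hadj hy (Ne.symm hxy)
    · exact (hadj hx hxy).symm

theorem eq_of_insert_eq_insert (hG : G.CliqueFree 3) {v w : V} {s t : Finset V}
    (hs : s ⊆ G.neighborFinset v) (ht : t ⊆ G.neighborFinset w) (hcard : 1 < #s)
    (h : insert v s = insert w t) : v = w := by
  by_contra hvw
  have hw : w ∈ s := (mem_insert.1 (h ▸ mem_insert_self w t)).resolve_left (Ne.symm hvw)
  obtain ⟨z, hz, hzw⟩ := exists_mem_ne hcard w
  have hzt : z ∈ t := (mem_insert.1 (h ▸ mem_insert_of_mem hz)).resolve_left hzw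
  exact isIndepSet_neighborSet_of_triangleFree G hG v (by simpa using hs hw)
    (by simpa using hs hz) (Ne.symm hzw) (by simpa using ht hzt)

theorem sum_choose_degree_le_copyCount_starGraph (hG : G.CliqueFree 3) {k : ℕ} (hk : 2 ≤ k) :
    ∑ v, (G.degree v).choose k ≤ _root_.copyCount (_root_.starGraph (k + 1)) G := by
  set S := univ.sigma fun v => (G.neighborFinset v).powersetCard k
  have hS {p : Σ _ : V, Finset V} (hp : p ∈ S) : p.2 ⊆ G.neighborFinset p.1 ∧ #p.2 = k := by
    simpa [S] using hp
  have hcenter {p : Σ _ : V, Finset V} (hp : p ∈ S) : p.1 ∉ p.2 := fun h => by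
    simpa using (hS hp).1 h
  have inj : Set.InjOn (fun p : Σ _ : V, Finset V => insert p.1 p.2) S := by
    rintro ⟨v, s⟩ hs ⟨w, t⟩ ht hst
    obtain rfl : v = w :=
      G.eq_of_insert_eq_insert hG (hS hs).1 (hS ht).1 (by rw [(hS hs).2]; omega) hst
    simp only at hst
    rw [← erase_insert (show v ∉ s from hcenter hs), hst,
      erase_insert (show v ∉ t from hcenter ht)]
  have maps : (S.image fun p => insert p.1 p.2 : Set (Finset V)) ⊆
      {s : Finset V | (G.induce (s : Set V)).Connected ∧
        Nonempty (G.induce (s : Set V) ≃g _root_.starGraph (k + 1))} := by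
    rw [coe_image]
    rintro _ ⟨p, hp, rfl⟩
    rw [Set.mem_ofPred_eq, G.induce_insert_eq_starGraph hG (hS hp).1]
    refine ⟨connected_starGraph _, nonempty_starGraph_iso_starGraph _ ?_⟩
    simp [card_insert_of_notMem (hcenter hp), (hS hp).2]
  calc ∑ v, (G.degree v).choose k = #S := by simp [S, card_sigma]
    _ = #(S.image fun p => insert p.1 p.2) := (card_image_of_injOn inj).symm
    _ ≤ _root_.copyCount (_root_.starGraph (k + 1)) G := by
      rw [← Set.ncard_coe_finset]
      exact Set.ncard_le_ncard maps

end SimpleGraph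

/-- `Y_ℓ`, the part of the degree-sum formula for `Y` coming from edges with an endpoint of
degree at least 4, satisfies `Y_ℓ ≤ 36 S`. -/
theorem Y_large_le_star {V : Type*} [Fintype V] [DecidableEq V] (T : SimpleGraph V)
    [DecidableRel T.Adj] (hT : T.IsTree) :
    (∑ e ∈ T.edgeFinset, Sym2.lift
      ⟨fun u v => if 4 ≤ max (T.degree u) (T.degree v) then
          (T.degree v - 1).choose 2 * (T.degree u - 1)
            + (T.degree u - 1).choose 2 * (T.degree v - 1)
        else 0,
        fun u v => by simp only []; rw [max_comm (T.degree u), add_comm]⟩ e)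
      ≤ 36 * _root_.copyCount (_root_.starGraph 5) T := by
  let h (v : V) := 9 * (T.degree v - 1).choose 3
  calc _ ≤ ∑ e ∈ T.edgeFinset, Sym2.lift ⟨fun u v => h u + h v, fun _ _ => add_comm _ _⟩ e := by
        refine sum_le_sum fun e _ => ?_
        induction e using Sym2.ind with
        | _ u v =>
          simp only [Sym2.lift_mk, h]
          split_ifs with hmax
          · linarith [Nat.choose_two_mul_add_le (T.degree u - 1) (T.degree v - 1) (by omega)]
          · positivity
    _ = ∑ v, T.degree v • h v := T.sum_edgeFinset_lift_add h
    _ = 36 * ∑ v, (T.degree v).choose 4 := by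
        simp only [mul_sum, smul_eq_mul, h, mul_left_comm _ 9, Nat.mul_choose_sub_one]
        ring_nf
    _ ≤ 36 * _root_.copyCount (_root_.starGraph 5) T := by
        gcongr
        exact T.sum_choose_degree_le_copyCount_starGraph (hT.isAcyclic.cliqueFree le_rfl)
          (by norm_num)
end

section
/- Let k ≥ 6 be even and let T_n be the (k−4)-millipede of length n, with n ≥ 2. Then S_k(T_n) = 0, P_k(T_n) ≤ n(k−3)^2, and Z_k(T_n) ≥ (n−2)·(3/2)^{k/2}. -/
/-!
The non-leaves of a `d`-millipede `T` (here `d = k - 4`) are the vertices of a path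
`x₀, …, x_{n-1}`, its spine, and since `T` is a tree the distance between two vertices of a path
is their distance along the path.

* Every vertex has degree at most `d + 2 = k - 2`, so there is no star on `k` vertices.
* The `k - 2` inner vertices of a copy of `P_k` have degree at least two, so they lie on the spine;
  as distances are preserved, they form a run `x_i, …, x_{i+k-3}`, read in one direction or the
  other. The copy is the unique path between its ends, which are a neighbour of `x_i` other than
  `x_{i+1}` and a neighbour of `x_{i+k-3}` other than `x_{i+k-4}`: at most `(k - 3)²` choices for
  each of at most `n` values of `i`.
* Each of the `n - 2` runs `x_i, x_{i+1}, x_{i+2}`, together with any `k - 3` of its at least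
  `3 (k - 4) ≥ 2 (k - 3)` leaf neighbours, is a subtree on `k` vertices, and the subtree determines
  both the run and the leaves. This gives at least `binom(2 (k - 3), k - 3) ≥ 2 ^ (k - 3)
  ≥ (3/2) ^ (k / 2)` subtrees per run.
-/

open SimpleGraph Finset

/-- `Z_k(T)`: the total number of `k`-vertex subtrees of `T`, i.e. the number of `k`-element
vertex subsets of `T` whose induced subgraph is connected. -/
noncomputable def subtreeCount {V : Type*} [Fintype V] (k : ℕ) (T : SimpleGraph V) : ℕ :=
  Set.ncard {s : Finset V | s.card = k ∧ (T.induce (s : Set V)).Connected}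

/-- A `d`-millipede: a tree all of whose non-leaf vertices lie on a single path
and have degree `d + 2`. -/
def IsMillipede {V : Type*} [Fintype V] (G : SimpleGraph V) [DecidableRel G.Adj] (d : ℕ) : Prop :=
  G.IsTree ∧ (∀ v, 1 < G.degree v → G.degree v = d + 2) ∧
    ∃ (x y : V) (p : G.Walk x y), p.IsPath ∧ ∀ v, 1 < G.degree v → v ∈ p.support

/-- The length of a millipede: its number of non-leaf vertices. -/
def millipedeLength {V : Type*} [Fintype V] (G : SimpleGraph V) [DecidableRel G.Adj] : ℕ :=
  (Finset.univ.filter fun v => 1 < G.degree v).card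

lemma Nat.forall_add_eq_or_forall_add_eq_of_dist_eq {z : ℕ → ℕ} {a b : ℕ}
    (hz : ∀ j l, a ≤ j → j ≤ b → a ≤ l → l ≤ b → Nat.dist (z j) (z l) = Nat.dist j l) :
    (∀ j, a ≤ j → j ≤ b → z j + a = z a + j) ∨
      (∀ j, a ≤ j → j ≤ b → z j + j = z a + a) := by
  rcases Nat.lt_or_ge a b with hab | hab
  · have h₁ := hz a (a + 1) le_rfl hab.le (by omega) hab
    unfold Nat.dist at h₁
    rcases (by omega : z (a + 1) = z a + 1 ∨ z a = z (a + 1) + 1) with h | h <;> [left; right] <;>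
    · intro j hj hjb
      have h₂ := hz a j le_rfl hab.le hj hjb
      have h₃ := hz (a + 1) j (by omega) hab hj hjb
      unfold Nat.dist at h₂ h₃
      omega
  · left
    intro j hj hjb
    obtain rfl : j = a := by omega
    rfl

lemma Nat.two_pow_le_centralBinom (m : ℕ) : 2 ^ m ≤ m.centralBinom := by
  induction m with
  | zero => simp
  | succ m ih =>
    have h := Nat.succ_mul_centralBinom_succ m
    have : (m + 1) * (2 * m.centralBinom) ≤ (m + 1) * (m + 1).centralBinom := by
      rw [h]
      nlinarith
    rw [pow_succ]
    nlinarith [Nat.le_of_mul_le_mul_left this (Nat.succ_pos m)]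

/-- Intersecting `C i ∪ L` with `P` recovers `C i`, and removing `P` recovers `L`. -/
lemma sum_card_choose_le_ncard {V : Type*} [Finite V] [DecidableEq V] {P : Finset V}
    {C D : ℕ → Finset V} {r m : ℕ} {𝒮 : Set (Finset V)} (hC : ∀ i < r, C i ⊆ P)
    (hD : ∀ i < r, Disjoint (D i) P) (hCinj : ∀ i < r, ∀ j < r, C i = C j → i = j)
    (h𝒮 : ∀ i < r, ∀ L ⊆ D i, L.card = m → C i ∪ L ∈ 𝒮) :
    ∑ i ∈ range r, (D i).card.choose m ≤ 𝒮.ncard := by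
  let F := (range r).sigma fun i => (D i).powersetCard m
  have hF : ∀ x ∈ F, (C x.1 ∪ x.2) ∩ P = C x.1 ∧ (C x.1 ∪ x.2) \ P = x.2 := by
    rintro ⟨i, L⟩ hx
    simp only [F, mem_sigma, mem_range, mem_powersetCard] at hx
    have hL : Disjoint L P := disjoint_of_subset_left hx.2.1 (hD i hx.1)
    rw [union_inter_distrib_right, inter_eq_left.mpr (hC i hx.1),
      disjoint_iff_inter_eq_empty.mp hL, union_sdiff_distrib, sdiff_eq_empty_iff_subset.mpr
      (hC i hx.1), sdiff_eq_self_of_disjoint hL]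
    simp
  have hinj : Set.InjOn (fun x : (_ : ℕ) × Finset V => C x.1 ∪ x.2) F := by
    rintro ⟨i, L⟩ hx ⟨j, L'⟩ hy h
    have hij := hCinj i (by simp_all [F]) j (by simp_all [F])
      (by rw [← (hF _ hx).1, ← (hF _ hy).1]; exact congrArg (· ∩ P) h)
    subst hij
    have := (hF _ hx).2.symm.trans ((congrArg (· \ P) h).trans (hF _ hy).2)
    simp_all
  calc ∑ i ∈ range r, (D i).card.choose m = F.card := by simp [F, card_sigma]
    _ = (F.image fun x => C x.1 ∪ x.2).card := (card_image_of_injOn hinj).symm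
    _ = ((F.image fun x => C x.1 ∪ x.2 : Finset (Finset V)) : Set (Finset V)).ncard :=
      (Set.ncard_coe_finset _).symm
    _ ≤ 𝒮.ncard := Set.ncard_le_ncard (fun S hS => by
        obtain ⟨⟨i, L⟩, hx, rfl⟩ := mem_image.mp hS
        simp only [F, mem_sigma, mem_range, mem_powersetCard] at hx
        exact h𝒮 i hx.1 L hx.2.1 hx.2.2) (Set.toFinite _)

lemma starGraph_degree_zero {k : ℕ} (hk : 0 < k)
    [Fintype ((_root_.starGraph k).neighborSet ⟨0, hk⟩)] :
    (_root_.starGraph k).degree ⟨0, hk⟩ = k - 1 := by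
  classical
  rw [← card_neighborSet_eq_degree, ← Set.toFinset_card]
  have : ((_root_.starGraph k).neighborSet ⟨0, hk⟩).toFinset = univ.erase ⟨0, hk⟩ := by
    ext j
    simp [_root_.starGraph, eq_comm, Fin.ext_iff]
  rw [this, card_erase_of_mem (mem_univ _), card_univ, Fintype.card_fin]

lemma copyCount_starGraph_eq_zero {V : Type*} [Fintype V] {G : SimpleGraph V}
    [DecidableRel G.Adj] {k : ℕ} (h : ∀ v, G.degree v + 1 < k) :
    _root_.copyCount (_root_.starGraph k) G = 0 := by
  classical
  rw [_root_.copyCount, Set.ncard_eq_zero]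
  refine Set.eq_empty_of_forall_notMem ?_
  rintro s ⟨hconn, ⟨e⟩⟩
  obtain ⟨c⟩ := hconn.nonempty
  have hk : 0 < k := (e c).pos
  let f := (Copy.induce G _).comp e.symm.toCopy
  have := f.degree_le ⟨0, hk⟩
  rw [starGraph_degree_zero] at this
  have := h (f ⟨0, hk⟩)
  omega

namespace SimpleGraph

variable {V : Type*} {G : SimpleGraph V}

lemma two_le_degree_of_adj_of_adj {v a b : V} [Fintype (G.neighborSet v)] (hab : a ≠ b)
    (ha : G.Adj v a) (hb : G.Adj v b) : 2 ≤ G.degree v := by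
  classical
  rw [← card_neighborFinset_eq_degree, ← card_pair hab]
  exact card_le_card (by simp [insert_subset_iff, ha, hb])

lemma induce_union_connected_of_forall_exists_adj {C L : Set V} (hC : (G.induce C).Connected)
    (hL : ∀ v ∈ L, ∃ c ∈ C, G.Adj c v) : (G.induce (C ∪ L)).Connected := by
  obtain ⟨⟨c₀, hc₀⟩⟩ := hC.nonempty
  refine induce_connected_of_patches c₀ (Or.inl hc₀) fun {v} hv => ?_
  rcases hv with hv | hv
  · exact ⟨C, Set.subset_union_left, hc₀, hv, hC.preconnected _ _⟩
  · obtain ⟨c, hc, hcv⟩ := hL v hv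
    have hconn : (G.induce (C ∪ {v})).Connected :=
      connected_induce_union hC.preconnected Preconnected.of_subsingleton hc rfl hcv
    exact ⟨C ∪ {v}, Set.union_subset_union_right _ (Set.singleton_subset_iff.mpr hv),
      Or.inl hc₀, Or.inr rfl, hconn.preconnected _ _⟩

lemma exists_walk_getVert_eq (f : ℕ → V) (m : ℕ) (hf : ∀ i < m, G.Adj (f i) (f (i + 1))) :
    ∃ p : G.Walk (f 0) (f m), p.length = m ∧ ∀ i ≤ m, p.getVert i = f i := by
  induction m generalizing f with
  | zero => exact ⟨.nil, rfl, by simp⟩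
  | succ m ih =>
    obtain ⟨p, hlen, hget⟩ := ih (f ∘ Nat.succ) fun i hi => hf (i + 1) (by omega)
    refine ⟨.cons (hf 0 (by omega)) p, by simp [hlen], ?_⟩
    rintro (_ | i) hi
    · simp
    · simpa using hget i (by omega)

namespace Walk

lemma IsPath.two_le_degree_getVert {u v : V} {p : G.Walk u v} (hp : p.IsPath) {i : ℕ}
    (hi₀ : 0 < i) (hi : i < p.length) [Fintype (G.neighborSet (p.getVert i))] :
    2 ≤ G.degree (p.getVert i) := by
  have hne : p.getVert (i - 1) ≠ p.getVert (i + 1) := fun h => by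
    have := hp.getVert_injOn (by omega : i - 1 ≤ p.length) (by omega : i + 1 ≤ p.length) h
    omega
  refine two_le_degree_of_adj_of_adj hne ?_ (p.adj_getVert_succ hi)
  have := p.adj_getVert_succ (i := i - 1) (by omega)
  rw [Nat.sub_add_cancel hi₀] at this
  exact this.symm

lemma connected_induce_getVert_triple {u v : V} (p : G.Walk u v) {i : ℕ}
    (hi : i + 2 ≤ p.length) :
    (G.induce {p.getVert i, p.getVert (i + 1), p.getVert (i + 2)}).Connected := by
  have h := induce_union_connected_of_forall_exists_adj
    (induce_pair_connected_of_adj (p.adj_getVert_succ (i := i) (by omega)))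
    (L := {p.getVert (i + 2)}) fun w hw => ⟨p.getVert (i + 1), by simp,
      Set.mem_singleton_iff.mp hw ▸ p.adj_getVert_succ (by omega)⟩
  rwa [Set.insert_union, Set.singleton_union] at h

lemma IsPath.card_getVert_triple [DecidableEq V] {u v : V} {p : G.Walk u v} (hp : p.IsPath)
    {i : ℕ} (hi : i + 2 ≤ p.length) :
    ({p.getVert i, p.getVert (i + 1), p.getVert (i + 2)} : Finset V).card = 3 := by
  have hne : ∀ j l, j ≤ i + 2 → l ≤ i + 2 → j ≠ l → p.getVert j ≠ p.getVert l :=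
    fun j l hj hl hjl h => hjl (hp.getVert_injOn (by omega : j ≤ p.length)
      (by omega : l ≤ p.length) h)
  exact card_eq_three.mpr ⟨_, _, _, hne _ _ (by omega) (by omega) (by omega),
    hne _ _ (by omega) (by omega) (by omega), hne _ _ (by omega) (by omega) (by omega), rfl⟩

lemma IsPath.eq_of_getVert_triple_eq [DecidableEq V] {u v : V} {p : G.Walk u v}
    (hp : p.IsPath) {i j : ℕ} (hi : i + 2 ≤ p.length) (hj : j + 2 ≤ p.length)
    (h : ({p.getVert i, p.getVert (i + 1), p.getVert (i + 2)} : Finset V) =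
      {p.getVert j, p.getVert (j + 1), p.getVert (j + 2)}) : i = j := by
  have hmem : ∀ {i j : ℕ}, i ≤ p.length → j + 2 ≤ p.length →
      p.getVert i ∈ ({p.getVert j, p.getVert (j + 1), p.getVert (j + 2)} : Finset V) →
      j ≤ i ∧ i ≤ j + 2 := by
    intro i j hi hj h
    simp only [mem_insert, mem_singleton] at h
    rcases h with h | h | h <;>
      have := hp.getVert_injOn (by omega : i ≤ p.length) (by omega : _ ≤ p.length) h <;> omega
  have h₁ := hmem (by omega) hj (h ▸ mem_insert_self _ _)
  have h₂ := hmem (by omega) hi (h.symm ▸ mem_insert_self _ _)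
  omega

end Walk

open Walk

lemma exists_isPath_of_iso_pathGraph {s : Set V} {m : ℕ} (e : G.induce s ≃g pathGraph (m + 1)) :
    ∃ (u v : V) (p : G.Walk u v),
      p.IsPath ∧ p.length = m ∧ ∀ w, w ∈ p.support ↔ w ∈ s := by
  let f : ℕ → V := fun i => e.symm ⟨min i m, by omega⟩
  have hf : ∀ i < m, G.Adj (f i) (f (i + 1)) := fun i hi =>
    e.symm.map_adj_iff.mpr (pathGraph_adj.mpr (Or.inl (show min i m + 1 = min (i + 1) m by omega)))
  obtain ⟨p, hlen, hget⟩ := exists_walk_getVert_eq f m hf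
  refine ⟨_, _, p, (IsPath.getVert_injOn_iff p).mp fun i hi j hj h => ?_, hlen, fun w => ?_⟩
  · simp only [Set.mem_ofPred_eq, hlen] at hi hj
    rw [hget i hi, hget j hj] at h
    have : min i m = min j m := congrArg Fin.val (e.symm.injective (Subtype.ext h))
    omega
  · rw [mem_support_iff_exists_getVert, hlen]
    constructor
    · rintro ⟨i, rfl, hi⟩
      rw [hget i hi]
      exact (e.symm _).2
    · intro hw
      have hle : (e ⟨w, hw⟩ : ℕ) ≤ m := Nat.le_of_lt_succ (e ⟨w, hw⟩).2
      refine ⟨e ⟨w, hw⟩, ?_, hle⟩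
      rw [hget _ hle]
      simp [f, Nat.min_eq_left hle]

lemma exists_isPath_forall_one_lt_degree_iff [G.LocallyFinite] (hne : ∃ v, 1 < G.degree v)
    (h : ∃ (x y : V) (p : G.Walk x y), p.IsPath ∧ ∀ v, 1 < G.degree v → v ∈ p.support) :
    ∃ (x y : V) (q : G.Walk x y), q.IsPath ∧ ∀ v, 1 < G.degree v ↔ v ∈ q.support := by
  classical
  have hP : ∃ L, ∃ (x y : V) (p : G.Walk x y),
      p.IsPath ∧ p.length = L ∧ ∀ v, 1 < G.degree v → v ∈ p.support := by
    obtain ⟨x, y, p, hp, hall⟩ := h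
    exact ⟨_, x, y, p, hp, rfl, hall⟩
  -- a shortest such path cannot start at a leaf, since dropping that leaf would shorten it
  have hstart : ∀ (x y : V) (p : G.Walk x y), p.IsPath → p.length = Nat.find hP →
      (∀ v, 1 < G.degree v → v ∈ p.support) → 1 < G.degree x := by
    intro x y p hp hlen hall
    by_contra hx
    obtain ⟨w, hw⟩ := hne
    obtain ⟨j, rfl, hj⟩ := mem_support_iff_exists_getVert.mp (hall w hw)
    have hj₀ : j ≠ 0 := by rintro rfl; rw [getVert_zero] at hw; exact hx hw
    have := Nat.find_min' hP ⟨_, _, p.drop 1, hp.drop 1, rfl, fun v hv => ?_⟩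
    · rw [drop_length] at this
      omega
    obtain ⟨i, rfl, hi⟩ := mem_support_iff_exists_getVert.mp (hall v hv)
    have hi₀ : i ≠ 0 := by rintro rfl; rw [getVert_zero] at hv; exact hx hv
    refine mem_support_iff_exists_getVert.mpr ⟨i - 1, ?_, by rw [drop_length]; omega⟩
    rw [drop_getVert]
    congr 1
    omega
  obtain ⟨x, y, p, hp, hlen, hall⟩ := Nat.find_spec hP
  refine ⟨x, y, p, hp, fun v => ⟨hall v, fun hv => ?_⟩⟩
  obtain ⟨i, rfl, hi⟩ := mem_support_iff_exists_getVert.mp hv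
  obtain rfl | rfl | ⟨hi₀, hi⟩ : i = 0 ∨ i = p.length ∨ 0 < i ∧ i < p.length := by omega
  · rw [getVert_zero]
    exact hstart x y p hp hlen hall
  · rw [getVert_length]
    exact hstart y x p.reverse hp.reverse (by rw [length_reverse, hlen])
      fun v hv => by simpa using hall v hv
  · have := hp.two_le_degree_getVert hi₀ hi
    omega

lemma IsAcyclic.length_eq_dist (hG : G.IsAcyclic) {u v : V} {p : G.Walk u v} (hp : p.IsPath) :
    p.length = G.dist u v := by
  obtain ⟨q, hq⟩ := p.reachable.exists_walk_length_eq_dist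
  have : p = q := congrArg Subtype.val
    ((hG.subsingleton_path u v).elim ⟨p, hp⟩ ⟨q, q.isPath_of_length_eq_dist hq⟩)
  rw [this, hq]

lemma IsAcyclic.dist_getVert (hG : G.IsAcyclic) {u v : V} {p : G.Walk u v} (hp : p.IsPath)
    {i j : ℕ} (hi : i ≤ p.length) (hj : j ≤ p.length) :
    G.dist (p.getVert i) (p.getVert j) = Nat.dist i j := by
  wlog hij : i ≤ j generalizing i j
  · rw [dist_comm, Nat.dist_comm]
    exact this hj hi (by omega)
  have h := hG.length_eq_dist ((hp.drop i).take (j - i))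
  rw [take_length, drop_length, drop_getVert, Nat.add_sub_cancel' hij] at h
  rw [← h, Nat.dist_eq_sub_of_le hij]
  omega

/-- Distances along `p` and along `q` are both graph distances, and an isometry of an interval of
`ℕ` is a translation or a reflection. -/
lemma IsAcyclic.exists_getVert_eq_getVert (hG : G.IsAcyclic) {u v u' v' : V} {p : G.Walk u v}
    {q : G.Walk u' v'} (hp : p.IsPath) (hq : q.IsPath) {a b : ℕ} (hab : a ≤ b)
    (hb : b ≤ p.length)
    (hsub : ∀ j, a ≤ j → j ≤ b → p.getVert j ∈ q.support) :
    ∃ i, i + (b - a) ≤ q.length ∧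
      ((∀ j, a ≤ j → j ≤ b → p.getVert j = q.getVert (i + j - a)) ∨
        ∀ j, a ≤ j → j ≤ b → p.getVert j = q.getVert (i + b - j)) := by
  have hz : ∀ j, ∃ t, a ≤ j → j ≤ b → q.getVert t = p.getVert j ∧ t ≤ q.length := by
    intro j
    by_cases h : a ≤ j ∧ j ≤ b
    · obtain ⟨t, ht⟩ := mem_support_iff_exists_getVert.mp (hsub j h.1 h.2)
      exact ⟨t, fun _ _ => ht⟩
    · exact ⟨0, fun h₁ h₂ => absurd ⟨h₁, h₂⟩ h⟩
  choose z hz using hz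
  have hdist : ∀ j l, a ≤ j → j ≤ b → a ≤ l → l ≤ b →
      Nat.dist (z j) (z l) = Nat.dist j l := by
    intro j l hj hjb hl hlb
    rw [← hG.dist_getVert hq (hz j hj hjb).2 (hz l hl hlb).2, (hz j hj hjb).1, (hz l hl hlb).1,
      hG.dist_getVert hp (hjb.trans hb) (hlb.trans hb)]
  have hza := hz a le_rfl hab
  have hzb := hz b hab le_rfl
  rcases Nat.forall_add_eq_or_forall_add_eq_of_dist_eq hdist with h | h
  · have := h b hab le_rfl
    refine ⟨z a, by omega, Or.inl fun j hj hjb => ?_⟩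
    rw [← (hz j hj hjb).1]
    congr 1
    have := h j hj hjb
    omega
  · have := h b hab le_rfl
    refine ⟨z b, by omega, Or.inr fun j hj hjb => ?_⟩
    rw [← (hz j hj hjb).1]
    congr 1
    have := h j hj hjb
    omega

section Finite

variable [Fintype V] [DecidableEq V] [DecidableRel G.Adj]

lemma disjoint_neighborFinset_sdiff {P : Finset V} (hP : ∀ v, 1 < G.degree v → v ∈ P)
    {c c' : V} (hcc' : c ≠ c') :
    Disjoint (G.neighborFinset c \ P) (G.neighborFinset c' \ P) := by
  rw [Finset.disjoint_left]
  intro v hv hv'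
  simp only [mem_sdiff, mem_neighborFinset] at hv hv'
  exact hv.2 (hP v (two_le_degree_of_adj_of_adj hcc' hv.1.symm hv'.1.symm))

variable {a b : V} {q : G.Walk a b}

lemma IsAcyclic.card_neighborFinset_inter_support_le_two (hG : G.IsAcyclic) (hq : q.IsPath)
    {t : ℕ} (ht : t ≤ q.length) :
    (G.neighborFinset (q.getVert t) ∩ q.support.toFinset).card ≤ 2 := by
  refine (card_le_card (t := {q.getVert (t - 1), q.getVert (t + 1)}) fun w hw => ?_).trans
    card_le_two
  rw [mem_inter, mem_neighborFinset, List.mem_toFinset] at hw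
  obtain ⟨j, rfl, hj⟩ := mem_support_iff_exists_getVert.mp hw.2
  have h := hG.dist_getVert hq ht hj
  rw [dist_eq_one_iff_adj.mpr hw.1] at h
  unfold Nat.dist at h
  rcases (by omega : j = t - 1 ∨ j = t + 1) with rfl | rfl <;> simp

lemma IsAcyclic.le_card_neighborFinset_sdiff_support (hG : G.IsAcyclic) (hq : q.IsPath) {t : ℕ}
    (ht : t ≤ q.length) :
    G.degree (q.getVert t) - 2 ≤ (G.neighborFinset (q.getVert t) \ q.support.toFinset).card := by
  have := card_sdiff_add_card_inter (G.neighborFinset (q.getVert t)) q.support.toFinset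
  have := hG.card_neighborFinset_inter_support_le_two hq ht
  rw [card_neighborFinset_eq_degree] at *
  omega

variable (G) in
/-- The candidate ordered ends `(a, b)` of a path with `m` edges whose inner vertices are
`x i, x (i + 1), …, x (i + m - 2)`. -/
def pathEnds (x : ℕ → V) (m i : ℕ) : Finset (V × V) :=
  (G.neighborFinset (x i)).erase (x (i + 1)) ×ˢ
    (G.neighborFinset (x (i + m - 2))).erase (x (i + m - 3))

lemma card_pathEnds {x : ℕ → V} {m i : ℕ} (h₁ : G.Adj (x i) (x (i + 1)))
    (h₂ : G.Adj (x (i + m - 2)) (x (i + m - 3))) :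
    (pathEnds G x m i).card = (G.degree (x i) - 1) * (G.degree (x (i + m - 2)) - 1) := by
  rw [pathEnds, card_product, card_erase_of_mem (mem_neighborFinset _ _ _ |>.mpr h₁),
    card_erase_of_mem (mem_neighborFinset _ _ _ |>.mpr h₂), card_neighborFinset_eq_degree,
    card_neighborFinset_eq_degree]

lemma mem_pathEnds_of_getVert_eq {x : ℕ → V} {i : ℕ} {u v : V} {p : G.Walk u v}
    (hp : p.IsPath) (hm : 3 ≤ p.length)
    (hx : ∀ j, 1 ≤ j → j < p.length → p.getVert j = x (i + j - 1)) :
    (u, v) ∈ pathEnds G x p.length i := by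
  have hne : ∀ j l, j ≤ p.length → l ≤ p.length → j ≠ l →
      p.getVert j ≠ p.getVert l :=
    fun j l hj hl hjl h => hjl (hp.getVert_injOn hj hl h)
  have h₁ : x i = p.getVert 1 := by rw [hx 1 le_rfl (by omega)]; rfl
  have h₂ : x (i + 1) = p.getVert 2 := by rw [hx 2 (by omega) (by omega)]; rfl
  have h₃ : x (i + p.length - 2) = p.getVert (p.length - 1) := by
    rw [hx _ (by omega) (by omega)]; congr 1; omega
  have h₄ : x (i + p.length - 3) = p.getVert (p.length - 2) := by
    rw [hx _ (by omega) (by omega)]; congr 1; omega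
  have hlast := p.adj_getVert_succ (i := p.length - 1) (by omega)
  rw [Nat.sub_add_cancel (by omega), getVert_length] at hlast
  simp only [pathEnds, mem_product, mem_erase, mem_neighborFinset, h₁, h₂, h₃, h₄]
  refine ⟨⟨?_, ?_⟩, ?_, hlast⟩
  · simpa using hne 0 2 (by omega) (by omega) (by omega)
  · simpa using (p.adj_getVert_succ (i := 0) (by omega)).symm
  · simpa using hne p.length (p.length - 2) le_rfl (by omega) (by omega)

lemma IsAcyclic.exists_mem_pathEnds (hG : G.IsAcyclic) (hq : q.IsPath)
    (hspine : ∀ v, 1 < G.degree v ↔ v ∈ q.support) {u v : V} {p : G.Walk u v} (hp : p.IsPath)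
    (hm : 3 ≤ p.length) :
    ∃ i, i + p.length - 2 ≤ q.length ∧
      ((u, v) ∈ pathEnds G q.getVert p.length i ∨
        (v, u) ∈ pathEnds G q.getVert p.length i) := by
  obtain ⟨i, hi, h | h⟩ := hG.exists_getVert_eq_getVert hp hq (a := 1) (b := p.length - 1)
    (by omega) (by omega) fun j hj₁ hj₂ =>
      (hspine _).mp (by have := hp.two_le_degree_getVert (i := j) (by omega) (by omega); omega)
  · exact ⟨i, by omega,
      Or.inl (mem_pathEnds_of_getVert_eq hp hm fun j hj₁ hj₂ => h j hj₁ (by omega))⟩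
  · refine ⟨i, by omega, Or.inr ?_⟩
    rw [← length_reverse]
    refine mem_pathEnds_of_getVert_eq hp.reverse (by rwa [length_reverse]) fun j hj₁ hj₂ => ?_
    rw [length_reverse] at hj₂
    rw [getVert_reverse, h _ (by omega) (by omega)]
    congr 1
    omega

lemma IsTree.copyCount_pathGraph_le (hG : G.IsTree) (hq : q.IsPath)
    (hspine : ∀ v, 1 < G.degree v ↔ v ∈ q.support) {m : ℕ} (hm : 3 ≤ m) :
    _root_.copyCount (pathGraph (m + 1)) G ≤
      ((range (q.length + 3 - m)).biUnion (pathEnds G q.getVert m)).card := by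
  set ends := (range (q.length + 3 - m)).biUnion (pathEnds G q.getVert m)
  choose path hpath using fun u v => (hG.existsUnique_path u v).exists
  have hsupp : ∀ {u v : V} (p : G.Walk u v), p.IsPath → (path u v).support = p.support :=
    fun p hp => by rw [(hG.existsUnique_path _ _).unique (hpath _ _) hp]
  calc _ ≤ ((ends.image fun e => (path e.1 e.2).support.toFinset : Finset (Finset V)) :
          Set (Finset V)).ncard := Set.ncard_le_ncard ?_ (Set.toFinite _)
    _ ≤ ends.card := by rw [Set.ncard_coe_finset]; exact card_image_le
  rintro s ⟨-, ⟨e⟩⟩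
  obtain ⟨u, v, p, hp, rfl, hs⟩ := exists_isPath_of_iso_pathGraph e
  have hs' : s = p.support.toFinset := by ext w; simp [hs]
  obtain ⟨i, hi, hends | hends⟩ := hG.isAcyclic.exists_mem_pathEnds hq hspine hp hm
  · exact mem_image.mpr ⟨(u, v), mem_biUnion.mpr ⟨i, mem_range.mpr (by omega), hends⟩,
      by rw [hsupp p hp, hs']⟩
  · exact mem_image.mpr ⟨(v, u), mem_biUnion.mpr ⟨i, mem_range.mpr (by omega), hends⟩,
      by rw [hsupp p.reverse hp.reverse, hs', support_reverse, List.toFinset_reverse]⟩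

end Finite

end SimpleGraph

open SimpleGraph Walk

section Millipede

variable {V : Type*} [Fintype V] {G : SimpleGraph V} [DecidableRel G.Adj] {d : ℕ}

lemma IsMillipede.degree_le (hG : IsMillipede G d) (v : V) : G.degree v ≤ d + 2 := by
  by_cases h : 1 < G.degree v
  · exact (hG.2.1 v h).le
  · omega

lemma millipedeLength_eq {a b : V} {q : G.Walk a b} (hq : q.IsPath)
    (hspine : ∀ v, 1 < G.degree v ↔ v ∈ q.support) : millipedeLength G = q.length + 1 := by
  classical
  have : univ.filter (fun v => 1 < G.degree v) = q.support.toFinset := by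
    ext v
    simp [hspine]
  rw [millipedeLength, this, List.toFinset_card_of_nodup hq.support_nodup, length_support]

variable [DecidableEq V] {a b : V} {q : G.Walk a b}

lemma IsMillipede.copyCount_pathGraph_le (hG : IsMillipede G d) (hq : q.IsPath)
    (hspine : ∀ v, 1 < G.degree v ↔ v ∈ q.support) :
    _root_.copyCount (pathGraph (d + 4)) G ≤ (q.length + 1) * (d + 1) ^ 2 := by
  have hdeg : ∀ t, G.degree (q.getVert t) = d + 2 :=
    fun t => hG.2.1 _ ((hspine _).mpr (getVert_mem_support _ _))
  calc _root_.copyCount (pathGraph (d + 3 + 1)) G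
      ≤ ((range (q.length + 3 - (d + 3))).biUnion (pathEnds G q.getVert (d + 3))).card :=
        hG.1.copyCount_pathGraph_le hq hspine (by omega)
    _ ≤ ∑ i ∈ range (q.length + 3 - (d + 3)), (pathEnds G q.getVert (d + 3) i).card :=
        card_biUnion_le
    _ = ∑ i ∈ range (q.length - d), (d + 1) ^ 2 := by
        refine sum_congr (by congr 1; omega) fun i hi => ?_
        rw [mem_range] at hi
        have h₂ := q.adj_getVert_succ (i := i + (d + 3) - 3) (by omega)
        rw [show i + (d + 3) - 3 + 1 = i + (d + 3) - 2 by omega] at h₂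
        rw [card_pathEnds (q.adj_getVert_succ (i := i) (by omega)) h₂.symm, hdeg, hdeg, sq]
        rfl
    _ ≤ (q.length + 1) * (d + 1) ^ 2 := by
        rw [sum_const, card_range, smul_eq_mul]
        gcongr
        omega

lemma IsMillipede.card_mul_le_card_biUnion (hG : IsMillipede G d) (hq : q.IsPath)
    (hspine : ∀ v, 1 < G.degree v ↔ v ∈ q.support) {S : Finset V}
    (hS : S ⊆ q.support.toFinset) :
    S.card * d ≤ (S.biUnion fun c => G.neighborFinset c \ q.support.toFinset).card := by
  rw [card_biUnion fun c _ c' _ hcc' => disjoint_neighborFinset_sdiff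
    (fun v hv => List.mem_toFinset.mpr ((hspine v).mp hv)) hcc', ← smul_eq_mul]
  refine card_nsmul_le_sum _ _ _ fun c hc => ?_
  obtain ⟨t, rfl, ht⟩ := mem_support_iff_exists_getVert.mp (List.mem_toFinset.mp (hS hc))
  have := hG.1.isAcyclic.le_card_neighborFinset_sdiff_support hq ht
  rw [hG.2.1 _ ((hspine _).mpr (getVert_mem_support _ _))] at this
  omega

lemma IsMillipede.le_subtreeCount (hG : IsMillipede G d) (hd : 2 ≤ d) (hq : q.IsPath)
    (hspine : ∀ v, 1 < G.degree v ↔ v ∈ q.support) :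
    (q.length - 1) * 2 ^ (d + 1) ≤ subtreeCount (d + 4) G := by
  let C : ℕ → Finset V := fun i => {q.getVert i, q.getVert (i + 1), q.getVert (i + 2)}
  let D : ℕ → Finset V := fun i =>
    (C i).biUnion fun c => G.neighborFinset c \ q.support.toFinset
  have hCP : ∀ i, C i ⊆ q.support.toFinset := fun i c hc => by
    simp only [C, mem_insert, mem_singleton] at hc
    rcases hc with rfl | rfl | rfl <;> exact List.mem_toFinset.mpr (getVert_mem_support _ _)
  have hDP : ∀ i, Disjoint (D i) q.support.toFinset := fun i => by
    simp only [D, disjoint_biUnion_left]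
    exact fun _ _ => sdiff_disjoint
  have hC : ∀ i, i + 2 ≤ q.length → (C i).card = 3 := fun i hi => hq.card_getVert_triple hi
  have hsubtree : ∀ i, i + 2 ≤ q.length → ∀ L ⊆ D i, L.card = d + 1 →
      (C i ∪ L).card = d + 4 ∧ (G.induce ((C i ∪ L : Finset V) : Set V)).Connected := by
    intro i hi L hL hLcard
    refine ⟨?_, ?_⟩
    · rw [card_union_of_disjoint (disjoint_of_subset_left (hCP i)
        (disjoint_of_subset_left hL (hDP i)).symm), hC i hi, hLcard]
      omega
    have hCconn : (G.induce (C i : Set V)).Connected := by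
      rw [show (C i : Set V) = {q.getVert i, q.getVert (i + 1), q.getVert (i + 2)} by simp [C]]
      exact q.connected_induce_getVert_triple hi
    rw [coe_union]
    refine induce_union_connected_of_forall_exists_adj hCconn fun v hv => ?_
    obtain ⟨c, hc, hcv⟩ := mem_biUnion.mp (hL hv)
    exact ⟨c, hc, (mem_neighborFinset _ _ _).mp (mem_sdiff.mp hcv).1⟩
  calc (q.length - 1) * 2 ^ (d + 1)
      = ∑ i ∈ range (q.length - 1), 2 ^ (d + 1) := by rw [sum_const, card_range, smul_eq_mul]
    _ ≤ ∑ i ∈ range (q.length - 1), (D i).card.choose (d + 1) := by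
        refine sum_le_sum fun i hi => ?_
        have : (C i).card * d ≤ (D i).card := hG.card_mul_le_card_biUnion hq hspine (hCP i)
        rw [hC i (by rw [mem_range] at hi; omega)] at this
        calc 2 ^ (d + 1) ≤ (d + 1).centralBinom := Nat.two_pow_le_centralBinom _
          _ = (2 * (d + 1)).choose (d + 1) := Nat.centralBinom_eq_two_mul_choose _
          _ ≤ _ := Nat.choose_le_choose _ (by omega)
    _ ≤ subtreeCount (d + 4) G :=
        sum_card_choose_le_ncard (fun i _ => hCP i) (fun i _ => hDP i)
          (fun i hi j hj => hq.eq_of_getVert_triple_eq (by omega) (by omega))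
          fun i hi L hL hLcard => hsubtree i (by omega) L hL hLcard

end Millipede

theorem millipede_counts_general {V : Type*} [Fintype V] (k n : ℕ) (hk : 6 ≤ k)
    (hn : 2 ≤ n) (T : SimpleGraph V) [DecidableRel T.Adj]
    (hm : IsMillipede T (k - 4)) (hlen : millipedeLength T = n) :
    _root_.copyCount (_root_.starGraph k) T = 0 ∧
    _root_.copyCount (SimpleGraph.pathGraph k) T ≤ n * (k - 3) ^ 2 ∧
    ((n : ℝ) - 2) * (3 / 2) ^ (k / 2) ≤ (subtreeCount k T : ℝ) := by
  classical
  obtain ⟨d, rfl⟩ : ∃ d, k = d + 4 := ⟨k - 4, by omega⟩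
  rw [Nat.add_sub_cancel] at hm
  have hne : ∃ v, 1 < T.degree v := by
    obtain ⟨v, hv⟩ := card_pos.mp (hlen ▸ (by omega : 0 < n))
    exact ⟨v, (mem_filter.mp hv).2⟩
  obtain ⟨a, b, q, hq, hspine⟩ := exists_isPath_forall_one_lt_degree_iff hne hm.2.2
  rw [millipedeLength_eq hq hspine] at hlen
  subst hlen
  refine ⟨copyCount_starGraph_eq_zero fun v => by have := hm.degree_le v; omega,
    hm.copyCount_pathGraph_le hq hspine, ?_⟩
  have hsub : ((q.length + 1 : ℕ) : ℝ) - 2 = ((q.length - 1 : ℕ) : ℝ) := by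
    rw [Nat.cast_sub (by omega)]
    push_cast
    ring
  calc ((q.length + 1 : ℕ) - 2 : ℝ) * (3 / 2) ^ ((d + 4) / 2)
      ≤ ((q.length - 1 : ℕ) : ℝ) * 2 ^ (d + 1) := by
        rw [hsub]
        gcongr
        calc ((3 : ℝ) / 2) ^ ((d + 4) / 2) ≤ 2 ^ ((d + 4) / 2) := by gcongr; norm_num
          _ ≤ 2 ^ (d + 1) := pow_le_pow_right₀ (by norm_num) (by omega)
    _ ≤ subtreeCount (d + 4) T := by exact_mod_cast hm.le_subtreeCount (by omega) hq hspine

/-- For even `k ≥ 6`, the `(k-4)`-millipede of length `n ≥ 2` satisfies `S_k = 0`,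
`P_k ≤ n (k-3)²` and `Z_k ≥ (n-2)(3/2)^(k/2)`. -/
theorem millipede_counts {V : Type*} [Fintype V] (k n : ℕ) (hk : 6 ≤ k) (hke : Even k)
    (hn : 2 ≤ n) (T : SimpleGraph V) [DecidableRel T.Adj]
    (hm : IsMillipede T (k - 4)) (hlen : millipedeLength T = n) :
    _root_.copyCount (_root_.starGraph k) T = 0 ∧
    _root_.copyCount (SimpleGraph.pathGraph k) T ≤ n * (k - 3) ^ 2 ∧
    ((n : ℝ) - 2) * (3 / 2) ^ (k / 2) ≤ (subtreeCount k T : ℝ) :=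
  millipede_counts_general k n hk hn T hm hlen
end
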